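/- arXiv:2201.02003 — 2 statements merged into one kernel-verified Lean document; each statement's English description precedes it below -/
import Mathlib

section
/- Let L/F be a field extension, let μ ∈ L ∖ F be algebraic over F, set K = F(μ) and t = dim_F(K). Let S̄ be a K-subspace of L with dim_K(S̄) = ℓ, where ℓ ≥ 1 is finite, and let b ∈ L ∖ {0} with S̄ ∩ bK = {0}. Let m, j > 0 be integers with m + j ≤ t + 1, and set S = S̄ ⊕ b·⟨1, μ, …, μ^{m−1}⟩_F and T = ⟨1, μ, …, μ^{j−1}⟩_F. Then ⟨ST⟩_F = S̄ ⊕ b·⟨1, μ, …, μ^{m+j−2}⟩_F and dim_F(⟨ST⟩_F) = tℓ + m + j − 1 = dim_F(S) + dim_F(T) − 1; in particular (S, T) is a critical pair. -/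
open Submodule Pointwise

/-- The span `⟨1, μ, …, μ^{m-1}⟩_F`. -/
noncomputable def pows (F : Type*) {L : Type*} [Field F] [Field L] [Algebra F L]
    (μ : L) (m : ℕ) : Submodule F L :=
  Submodule.span F (Set.range fun i : Fin m => μ ^ (i : ℕ))

/-- Multiplication of a subspace by a scalar: `b · W`. -/
noncomputable def bmul (F : Type*) {L : Type*} [Field F] [Field L] [Algebra F L]
    (b : L) (W : Submodule F L) : Submodule F L :=
  W.map (LinearMap.mulLeft F b)

/-! Multiplying by `⟨1, μ, …, μ^{j-1}⟩_F` fixes the `F(μ)`-subspace `S̄` and lengthens the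
string of powers `b, bμ, …, bμ^{m-1}` to `b, bμ, …, bμ^{m+j-2}`. As long as
`m + j - 1 ≤ [F(μ) : F]` these powers stay linearly independent, and `S̄ ∩ bF(μ) = 0` makes
the sum with `S̄` direct, so the dimension of the product is `tℓ + m + j - 1`. -/

theorem Submodule.finrank_sup_of_disjoint {K V : Type*} [DivisionRing K] [AddCommGroup V]
    [Module K V] {A B : Submodule K V} [FiniteDimensional K A] [FiniteDimensional K B]
    (h : Disjoint A B) : Module.finrank K ↥(A ⊔ B) = Module.finrank K A + Module.finrank K B := by
  rw [← finrank_sup_add_finrank_inf_eq, h.eq_bot, finrank_bot, add_zero]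

section

variable {F L : Type*} [Field F] [Field L] [Algebra F L]

theorem bmul_eq_span_singleton_mul (b : L) (W : Submodule F L) :
    bmul F b W = span F {b} * W := by
  ext x
  simp [bmul, mem_span_singleton_mul]

theorem finrank_bmul {b : L} (hb : b ≠ 0) (W : Submodule F L) :
    Module.finrank F ↥(bmul F b W) = Module.finrank F W :=
  (equivMapOfInjective _ (mul_right_injective₀ hb) W).finrank_eq.symm

theorem pows_mul_pows (μ : L) {m j : ℕ} (hm : 0 < m) (hj : 0 < j) :
    pows F μ m * pows F μ j = pows F μ (m + j - 1) := by
  rw [pows, pows, pows, span_mul_span]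
  apply le_antisymm
  · rw [span_le]
    rintro _ ⟨_, ⟨a, rfl⟩, _, ⟨c, rfl⟩, rfl⟩
    exact subset_span ⟨⟨a + c, by omega⟩, pow_add μ a c⟩
  · rw [span_le]
    rintro _ ⟨k, rfl⟩
    refine subset_span ⟨_, ⟨⟨min (k : ℕ) (m - 1), by omega⟩, rfl⟩,
      _, ⟨⟨k - min (k : ℕ) (m - 1), by omega⟩, rfl⟩, ?_⟩
    simp only [← pow_add]
    congr 1
    omega

theorem pows_le_adjoin (μ : L) (k : ℕ) :
    pows F μ k ≤ Subalgebra.toSubmodule (Algebra.adjoin F {μ}) := by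
  rw [pows, span_le]
  rintro _ ⟨i, rfl⟩
  exact pow_mem (Algebra.self_mem_adjoin_singleton F μ) _

theorem one_mem_pows (μ : L) {k : ℕ} (hk : 0 < k) : (1 : L) ∈ pows F μ k :=
  subset_span ⟨⟨0, hk⟩, pow_zero μ⟩

theorem mul_pows_eq_self {μ : L} {V : Submodule F L}
    (hV : ∀ α ∈ Algebra.adjoin F {μ}, ∀ v ∈ V, α * v ∈ V) {j : ℕ} (hj : 0 < j) :
    V * pows F μ j = V := by
  apply le_antisymm
  · rw [mul_le]
    intro v hv p hp
    rw [mul_comm]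
    exact hV p (pows_le_adjoin μ j hp) v hv
  · intro v hv
    simpa using mul_mem_mul hv (one_mem_pows μ hj)

theorem sup_bmul_pows_mul_pows {μ : L} {V : Submodule F L}
    (hV : ∀ α ∈ Algebra.adjoin F {μ}, ∀ v ∈ V, α * v ∈ V) (b : L) {m j : ℕ}
    (hm : 0 < m) (hj : 0 < j) :
    (V ⊔ bmul F b (pows F μ m)) * pows F μ j = V ⊔ bmul F b (pows F μ (m + j - 1)) := by
  rw [Submodule.sup_mul, mul_pows_eq_self hV hj, bmul_eq_span_singleton_mul, mul_assoc,
    pows_mul_pows μ hm hj, ← bmul_eq_span_singleton_mul]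

theorem linearIndependent_pow_of_le_natDegree (μ : L) {k : ℕ}
    (hk : k ≤ (minpoly F μ).natDegree) :
    LinearIndependent F fun i : Fin k => μ ^ (i : ℕ) :=
  (linearIndependent_pow μ).comp (Fin.castLE hk) (Fin.castLE_injective hk)

theorem finrank_pows (μ : L) {k : ℕ} (hk : k ≤ (minpoly F μ).natDegree) :
    Module.finrank F ↥(pows F μ k) = k := by
  rw [pows, finrank_span_eq_card (linearIndependent_pow_of_le_natDegree μ hk),
    Fintype.card_fin]

theorem finrank_sup_bmul_pows {μ : L} {V : Submodule F L} [FiniteDimensional F V] {b : L}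
    (hb : b ≠ 0) (hdisj : Disjoint V (bmul F b (Subalgebra.toSubmodule (Algebra.adjoin F {μ}))))
    {k : ℕ} (hk : k ≤ (minpoly F μ).natDegree) :
    Module.finrank F ↥(V ⊔ bmul F b (pows F μ k)) = Module.finrank F V + k := by
  have : FiniteDimensional F (pows F μ k) := FiniteDimensional.span_of_finite F (Set.finite_range _)
  have : FiniteDimensional F (bmul F b (pows F μ k)) := Module.Finite.map _ _
  have hdisj' : Disjoint V (bmul F b (pows F μ k)) :=
    hdisj.mono_right (map_mono (pows_le_adjoin μ k))
  rw [finrank_sup_of_disjoint hdisj', finrank_bmul hb, finrank_pows μ hk]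

end

theorem stmt17_general (F L : Type*) [Field F] [Field L] [Algebra F L]
    (μ : L) (halg : IsAlgebraic F μ)
    (t : ℕ) (ht : Module.finrank F ↥(Algebra.adjoin F {μ}) = t)
    (Sbar : Submodule F L)
    (hSmod : ∀ α ∈ Algebra.adjoin F {μ}, ∀ s ∈ Sbar, α * s ∈ Sbar)
    (l : ℕ) (hl : 1 ≤ l) (hSdim : Module.finrank F ↥Sbar = l * t)
    (b : L) (hb : b ≠ 0)
    (hdisj : Disjoint Sbar (bmul F b (Subalgebra.toSubmodule (Algebra.adjoin F {μ}))))
    (m j : ℕ) (hm : 0 < m) (hj : 0 < j) (hmj : m + j ≤ t + 1)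
    (S : Submodule F L) (hS : S = Sbar ⊔ bmul F b (pows F μ m))
    (T : Submodule F L) (hT : T = pows F μ j) :
    Submodule.span F ((S : Set L) * (T : Set L))
        = Sbar ⊔ bmul F b (pows F μ (m + j - 1)) ∧
    Module.finrank F ↥(Submodule.span F ((S : Set L) * (T : Set L))) + 1
        = t * l + m + j ∧
    Module.finrank F ↥(Submodule.span F ((S : Set L) * (T : Set L))) + 1
        = Module.finrank F ↥S + Module.finrank F ↥T := by
  have hint : IsIntegral F μ := halg.isIntegral
  have hdeg : (minpoly F μ).natDegree = t := by
    rw [← ht, (Algebra.adjoin.powerBasis hint).finrank]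
    rfl
  have htpos : 0 < t := hdeg ▸ minpoly.natDegree_pos hint
  have : FiniteDimensional F Sbar :=
    Module.finite_of_finrank_pos (by rw [hSdim]; exact Nat.mul_pos hl htpos)
  have hST : span F ((S : Set L) * (T : Set L)) = Sbar ⊔ bmul F b (pows F μ (m + j - 1)) := by
    rw [← mul_eq_span_mul_set, hS, hT, sup_bmul_pows_mul_pows hSmod b hm hj]
  have hdimST := finrank_sup_bmul_pows hb hdisj (k := m + j - 1) (by omega)
  have hdimS := finrank_sup_bmul_pows hb hdisj (k := m) (by omega)
  have hdimT := finrank_pows (F := F) μ (k := j) (by omega)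
  rw [hST, hdimST, hSdim]
  refine ⟨rfl, by rw [Nat.mul_comm]; omega, ?_⟩
  rw [hS, hdimS, hSdim, hT, hdimT]
  omega

/-- `L/F` a field extension, `μ ∈ L \ F` algebraic over `F`,
`K = F(μ)`, `t = dim_F K`, `S̄` a `K`-subspace of `L` of `K`-dimension `ℓ ≥ 1`
(equivalently, closed under multiplication by `K` and of `F`-dimension `ℓt`),
`b ≠ 0` with `S̄ ∩ bK = {0}`, `m, j > 0`, `m + j ≤ t + 1`,
`S = S̄ ⊕ b·⟨1, μ, …, μ^{m-1}⟩_F`, `T = ⟨1, μ, …, μ^{j-1}⟩_F`. Then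
`⟨ST⟩_F = S̄ ⊕ b·⟨1, μ, …, μ^{m+j-2}⟩_F` and
`dim_F ⟨ST⟩_F = tℓ + m + j - 1 = dim_F S + dim_F T - 1`; in particular `(S,T)` is a
critical pair. -/
theorem stmt17 (F L : Type*) [Field F] [Field L] [Algebra F L]
    (μ : L) (hμ : μ ∉ Set.range (algebraMap F L)) (halg : IsAlgebraic F μ)
    (t : ℕ) (ht : Module.finrank F ↥(Algebra.adjoin F {μ}) = t)
    (Sbar : Submodule F L)
    (hSmod : ∀ α ∈ Algebra.adjoin F {μ}, ∀ s ∈ Sbar, α * s ∈ Sbar)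
    (l : ℕ) (hl : 1 ≤ l) (hSdim : Module.finrank F ↥Sbar = l * t)
    (b : L) (hb : b ≠ 0)
    (hdisj : Disjoint Sbar (bmul F b (Subalgebra.toSubmodule (Algebra.adjoin F {μ}))))
    (m j : ℕ) (hm : 0 < m) (hj : 0 < j) (hmj : m + j ≤ t + 1)
    (S : Submodule F L) (hS : S = Sbar ⊔ bmul F b (pows F μ m))
    (T : Submodule F L) (hT : T = pows F μ j) :
    Submodule.span F ((S : Set L) * (T : Set L))
        = Sbar ⊔ bmul F b (pows F μ (m + j - 1)) ∧
    Module.finrank F ↥(Submodule.span F ((S : Set L) * (T : Set L))) + 1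
        = t * l + m + j ∧
    Module.finrank F ↥(Submodule.span F ((S : Set L) * (T : Set L))) + 1
        = Module.finrank F ↥S + Module.finrank F ↥T :=
  stmt17_general F L μ halg t ht Sbar hSmod l hl hSdim b hb hdisj m j hm hj hmj S hS T hT
end

section
/- Let L/F be a field extension, let S be an F-subspace of L of finite dimension k ≥ 2, and let T = ⟨1, μ⟩_F for some μ ∈ L ∖ F algebraic over F, with k + 2 ≤ dim_F(L). Set K = F(μ) and t = dim_F(K). Suppose dim_F(⟨ST⟩_F) = k + 1. Then one of the following holds: (1) t > k and S = b·⟨1, μ, …, μ^{k−1}⟩_F for some b ∈ L ∖ {0}; (2) t ≤ k−1, and writing k = tℓ + m with 0 ≤ m < t, one has m > 0 and S = S̄ ⊕ b·⟨1, μ, …, μ^{m−1}⟩_F, where S̄ is a K-subspace of L with dim_K(S̄) = ℓ, b ∈ L ∖ {0}, and bK ∩ S̄ = {0}. -/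
set_option maxHeartbeats 1000000
set_option synthInstance.maxHeartbeats 400000

open Submodule Pointwise Module

section aux
variable (F : Type*) {L : Type*} [Field F] [Field L] [Algebra F L]

lemma mem_bmul {b x : L} {W : Submodule F L} : x ∈ bmul F b W ↔ ∃ y ∈ W, b * y = x := by
  simp [bmul]

lemma bmul_mono (b : L) {W₁ W₂ : Submodule F L} (h : W₁ ≤ W₂) : bmul F b W₁ ≤ bmul F b W₂ :=
  Submodule.map_mono h

lemma mulLeft_inj {b : L} (hb : b ≠ 0) : Function.Injective (LinearMap.mulLeft F b) := by
  intro x y h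
  exact mul_left_cancel₀ hb h

lemma bmul_finrank {b : L} (hb : b ≠ 0) (W : Submodule F L) :
    finrank F (bmul F b W) = finrank F W :=
  (LinearEquiv.finrank_eq (Submodule.equivMapOfInjective _ (mulLeft_inj F hb) W)).symm

instance bmul_fd {b : L} (W : Submodule F L) [FiniteDimensional F W] :
    FiniteDimensional F (bmul F b W) :=
  Module.Finite.map W (LinearMap.mulLeft F b)

end aux

noncomputable def chainC (F : Type*) {L : Type*} [Field F] [Field L] [Algebra F L]
    (μ : L) (S : Submodule F L) : ℕ → Submodule F L
  | 0 => S
  | (i+1) => chainC F μ S i ⊓ bmul F μ (chainC F μ S i)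

section chain
variable (F : Type*) {L : Type*} [Field F] [Field L] [Algebra F L]
variable (μ : L) (S : Submodule F L)

lemma chainC_zero : chainC F μ S 0 = S := rfl

lemma chainC_succ (i : ℕ) :
    chainC F μ S (i+1) = chainC F μ S i ⊓ bmul F μ (chainC F μ S i) := rfl

lemma chainC_le_succ (i : ℕ) : chainC F μ S (i+1) ≤ chainC F μ S i := inf_le_left

lemma chainC_le (i : ℕ) : chainC F μ S i ≤ S := by
  induction i with
  | zero => exact le_rfl
  | succ n ih => exact le_trans (chainC_le_succ F μ S n) ih

instance chainC_fd [FiniteDimensional F S] (i : ℕ) : FiniteDimensional F (chainC F μ S i) :=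
  Submodule.finiteDimensional_of_le (chainC_le F μ S i)

/-- key intersection identity: `(C_{i+1} ⊔ μC_{i+1}) ⊓ C_i = C_{i+1}`. -/
lemma chainC_sup_inf (i : ℕ) :
    (chainC F μ S (i+1) ⊔ bmul F μ (chainC F μ S (i+1))) ⊓ chainC F μ S i
      = chainC F μ S (i+1) := by
  apply le_antisymm
  · intro x hx
    rw [Submodule.mem_inf] at hx
    obtain ⟨hx1, hx2⟩ := hx
    rw [Submodule.mem_sup] at hx1
    obtain ⟨c, hc, m, hm, rfl⟩ := hx1
    have hmC : m ∈ chainC F μ S i := by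
      have h' : m = (c + m) - c := by ring
      rw [h']
      exact Submodule.sub_mem _ hx2 (chainC_le_succ F μ S i hc)
    have hmB : m ∈ bmul F μ (chainC F μ S i) :=
      bmul_mono F μ (chainC_le_succ F μ S i) hm
    exact Submodule.add_mem _ hc (by rw [chainC_succ]; exact Submodule.mem_inf.2 ⟨hmC, hmB⟩)
  · exact le_inf le_sup_left (chainC_le_succ F μ S i)

/-- convexity of the dimension sequence -/
lemma chainC_convex [FiniteDimensional F S] (hμ0 : μ ≠ 0) (i : ℕ) :
    2 * finrank F (chainC F μ S (i+1)) ≤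
      finrank F (chainC F μ S i) + finrank F (chainC F μ S (i+2)) := by
  have hA := Submodule.finrank_sup_add_finrank_inf_eq
    (chainC F μ S (i+1)) (bmul F μ (chainC F μ S (i+1)))
  rw [bmul_finrank F hμ0, ← chainC_succ] at hA
  have hB := Submodule.finrank_sup_add_finrank_inf_eq
    (chainC F μ S i) (bmul F μ (chainC F μ S i))
  rw [bmul_finrank F hμ0, ← chainC_succ] at hB
  have hC := Submodule.finrank_sup_add_finrank_inf_eq
    (chainC F μ S (i+1) ⊔ bmul F μ (chainC F μ S (i+1))) (chainC F μ S i)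
  rw [chainC_sup_inf F μ S i] at hC
  have hD : finrank F ↥((chainC F μ S (i+1) ⊔ bmul F μ (chainC F μ S (i+1))) ⊔ chainC F μ S i)
      ≤ finrank F ↥(chainC F μ S i ⊔ bmul F μ (chainC F μ S i)) := by
    apply Submodule.finrank_mono
    apply sup_le (sup_le _ _) le_sup_left
    · exact le_trans (chainC_le_succ F μ S i) le_sup_left
    · exact le_trans (bmul_mono F μ (chainC_le_succ F μ S i)) le_sup_right
  have hA' : finrank F ↥(chainC F μ S (i+1) ⊔ bmul F μ (chainC F μ S (i+1)))
      + finrank F ↥(chainC F μ S (i+2)) =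
      finrank F ↥(chainC F μ S (i+1)) + finrank F ↥(chainC F μ S (i+1)) := hA
  omega

lemma chainC_drop [FiniteDimensional F S] (hμ0 : μ ≠ 0)
    (h1 : finrank F (chainC F μ S 0) ≤ finrank F (chainC F μ S 1) + 1) (i : ℕ) :
    finrank F (chainC F μ S i) ≤ finrank F (chainC F μ S (i+1)) + 1 := by
  induction i with
  | zero => exact h1
  | succ n ih =>
    have h2 := chainC_convex F μ S hμ0 n
    show finrank F (chainC F μ S (n+1)) ≤ finrank F (chainC F μ S (n+2)) + 1
    omega

lemma chainC_stab [FiniteDimensional F S] :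
    ∃ i, chainC F μ S (i+1) = chainC F μ S i := by
  by_contra h
  push_neg at h
  have key : ∀ i, finrank F (chainC F μ S i) + i ≤ finrank F (chainC F μ S 0) := by
    intro i
    induction i with
    | zero => omega
    | succ n ih =>
      have hlt : finrank F (chainC F μ S (n+1)) < finrank F (chainC F μ S n) :=
        Submodule.finrank_lt_finrank_of_lt (lt_of_le_of_ne (chainC_le_succ F μ S n) (h n))
      omega
  have := key (finrank F (chainC F μ S 0) + 1)
  omega

end chain

section st
variable (F : Type*) {L : Type*} [Field F] [Field L] [Algebra F L]

lemma pows_two (μ : L) : pows F μ 2 = Submodule.span F {1, μ} := by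
  unfold pows
  congr 1
  ext x
  simp only [Set.mem_range, Set.mem_insert_iff, Set.mem_singleton_iff]
  constructor
  · rintro ⟨i, rfl⟩
    fin_cases i <;> simp
  · rintro (rfl | rfl)
    · exact ⟨0, by simp⟩
    · exact ⟨1, by simp⟩

lemma span_mul_T (μ : L) (S : Submodule F L) :
    Submodule.span F ((S : Set L) * (pows F μ 2 : Set L)) = S ⊔ bmul F μ S := by
  rw [← Submodule.span_mul_span F (S : Set L) ((pows F μ 2 : Set L)), Submodule.span_eq,
    Submodule.span_eq, pows_two]
  have h1 : Submodule.span F ({1, μ} : Set L) = Submodule.span F {1} ⊔ Submodule.span F {μ} := by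
    rw [← Submodule.span_union, Set.singleton_union]
  rw [h1, Submodule.mul_sup]
  congr 1
  · rw [← Submodule.one_eq_span, Submodule.mul_one]
  · ext x
    rw [Submodule.mem_mul_span_singleton]
    simp only [bmul, Submodule.mem_map, LinearMap.mulLeft_apply]
    constructor
    · rintro ⟨z, hz, rfl⟩
      exact ⟨z, hz, mul_comm μ z⟩
    · rintro ⟨y, hy, rfl⟩
      exact ⟨y, hy, mul_comm y μ⟩

lemma finrank_dvd_of_stable (μ : L) (halg : IsAlgebraic F μ) (W : Submodule F L)
    [FiniteDimensional F W]
    (hstab : ∀ α ∈ Algebra.adjoin F {μ}, ∀ x ∈ W, α * x ∈ W) :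
    ∃ l : ℕ, finrank F W = l * finrank F ↥(Algebra.adjoin F {μ}) := by
  set K := Algebra.adjoin F {μ} with hK
  haveI : FiniteDimensional F K := Module.Finite.iff_fg.2 halg.isIntegral.fg_adjoin_singleton
  let W' : Submodule ↥K L :=
    { carrier := (W : Set L)
      add_mem' := fun ha hb => W.add_mem ha hb
      zero_mem' := W.zero_mem
      smul_mem' := fun c x hx => by
        have h := hstab (c : L) c.2 x hx
        simpa [Algebra.smul_def] using h }
  haveI : Module.Finite ↥K ↥W' := by
    have hrs : W'.restrictScalars F = W := rfl
    haveI : Module.Finite F ↥(W'.restrictScalars F) := by rw [hrs]; infer_instance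
    exact Module.Finite.of_restrictScalars_finite F ↥K ↥W'
  letI : Field ↥K :=
    (isField_of_isIntegral_of_isField' (R := F) (S := ↥K) (Field.toIsField F)).toField
  refine ⟨finrank ↥K ↥W', ?_⟩
  have htower := Module.finrank_mul_finrank F ↥K ↥W'
  have hfr : finrank F ↥W' = finrank F ↥W := rfl
  rw [hfr] at htower
  rw [← htower, mul_comm]

lemma inv_mem_adjoin (μ : L) (halg : IsAlgebraic F μ) {α : L}
    (hα : α ∈ Algebra.adjoin F {μ}) : α⁻¹ ∈ Algebra.adjoin F {μ} := by
  set K := Algebra.adjoin F {μ} with hK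
  haveI : FiniteDimensional F K := Module.Finite.iff_fg.2 halg.isIntegral.fg_adjoin_singleton
  have hint : IsIntegral F (⟨α, hα⟩ : K) := IsIntegral.of_finite F _
  have halg' : IsAlgebraic F ((⟨α, hα⟩ : K) : L) := (hint.map (K.val)).isAlgebraic
  exact K.inv_mem_of_algebraic halg'

end st

/-- `L/F` a field extension, `S` an `F`-subspace of `L` of finite
dimension `k ≥ 2`, `T = ⟨1, μ⟩_F` with `μ ∈ L \ F` algebraic over `F`,
`k + 2 ≤ dim_F L`, `K = F(μ)`, `t = dim_F K`. If `dim_F ⟨ST⟩_F = k + 1` then either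
(1) `t > k` and `S = b·⟨1, μ, …, μ^{k-1}⟩_F` for some `b ≠ 0`, or (2) `t ≤ k - 1`
and, writing `k = tℓ + m` with `0 < m < t`, `S = S̄ ⊕ b·⟨1, μ, …, μ^{m-1}⟩_F` where
`S̄` is a `K`-subspace of `K`-dimension `ℓ`, `b ≠ 0` and `bK ∩ S̄ = {0}`. -/
theorem stmt18 (F L : Type*) [Field F] [Field L] [Algebra F L]
    (k : ℕ) (hk : 2 ≤ k)
    (S : Submodule F L) (hS : Module.finrank F ↥S = k)
    (μ : L) (hμ : μ ∉ Set.range (algebraMap F L)) (halg : IsAlgebraic F μ)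
    (hdimL : (k : Cardinal) + 2 ≤ Module.rank F L)
    (T : Submodule F L) (hT : T = pows F μ 2)
    (t : ℕ) (ht : Module.finrank F ↥(Algebra.adjoin F {μ}) = t)
    (hST : Module.finrank F ↥(Submodule.span F ((S : Set L) * (T : Set L))) = k + 1) :
    (k < t ∧ ∃ b : L, b ≠ 0 ∧ S = bmul F b (pows F μ k)) ∨
    (t ≤ k - 1 ∧
      ∃ l m : ℕ, k = t * l + m ∧ 0 < m ∧ m < t ∧
        ∃ (Sbar : Submodule F L) (b : L), b ≠ 0 ∧
          (∀ α ∈ Algebra.adjoin F {μ}, ∀ s ∈ Sbar, α * s ∈ Sbar) ∧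
          Module.finrank F ↥Sbar = l * t ∧
          Disjoint (bmul F b (Subalgebra.toSubmodule (Algebra.adjoin F {μ}))) Sbar ∧
          S = Sbar ⊔ bmul F b (pows F μ m)) := by
  classical
  have hμ0 : μ ≠ 0 := by
    rintro rfl
    exact hμ ⟨0, by simp⟩
  haveI hSfd : FiniteDimensional F S := FiniteDimensional.of_finrank_pos (by omega)
  set K := Algebra.adjoin F {μ} with hKdef
  haveI hKfd : FiniteDimensional F K :=
    Module.Finite.iff_fg.2 halg.isIntegral.fg_adjoin_singleton
  -- dimension of `S + μS`
  have hsum : finrank F ↥(S ⊔ bmul F μ S) = k + 1 := by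
    rw [hT, span_mul_T] at hST
    exact hST
  set C := chainC F μ S with hC
  have hd1 : finrank F (C 1) + 1 = k := by
    have h := Submodule.finrank_sup_add_finrank_inf_eq S (bmul F μ S)
    rw [bmul_finrank F hμ0, hsum, hS] at h
    have h2 : C 1 = S ⊓ bmul F μ S := rfl
    rw [h2]
    omega
  have hdrop : ∀ i, finrank F (C i) ≤ finrank F (C (i+1)) + 1 := by
    apply chainC_drop F μ S hμ0
    have h0 : C 0 = S := rfl
    rw [← hC, h0, hS]
    omega
  obtain hex := chainC_stab F μ S
  set s := Nat.find hex with hsdef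
  have hs_eq : C (s+1) = C s := Nat.find_spec hex
  have hs_min : ∀ i < s, C (i+1) ≠ C i := fun i hi => Nat.find_min hex hi
  have hεi : ∀ i < s, finrank F (C (i+1)) + 1 = finrank F (C i) := by
    intro i hi
    have hlt : finrank F (C (i+1)) < finrank F (C i) :=
      Submodule.finrank_lt_finrank_of_lt (lt_of_le_of_ne (chainC_le_succ F μ S i) (hs_min i hi))
    have := hdrop i
    omega
  have hdi : ∀ i ≤ s, finrank F (C i) + i = k := by
    intro i hi
    induction i with
    | zero =>
      have h0 : C 0 = S := rfl
      rw [h0, hS]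
      omega
    | succ n ih =>
      have h1 := hεi n (by omega)
      have h2 := ih (by omega)
      omega
  have hs_pos : 0 < s := by
    rcases Nat.eq_zero_or_pos s with h | h
    · exfalso
      have := hs_eq
      rw [h] at this
      have h1 : finrank F (C 1) = finrank F (C 0) := by rw [this]
      have h0 : C 0 = S := rfl
      rw [h0, hS] at h1
      omega
    · exact h
  -- W := C s is K-stable
  have hWle : C s ≤ bmul F μ (C s) := by
    have h1 : C (s+1) = C s ⊓ bmul F μ (C s) := rfl
    rw [h1] at hs_eq
    intro x hx
    rw [← hs_eq] at hx
    exact hx.2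
  have hWeq : C s = bmul F μ (C s) := by
    apply Submodule.eq_of_le_of_finrank_le hWle
    rw [bmul_finrank F hμ0]
  have hWμ : ∀ x ∈ C s, μ * x ∈ C s := by
    intro x hx
    rw [hWeq]
    exact (mem_bmul F).2 ⟨x, hx, rfl⟩
  have hWstab : ∀ α ∈ K, ∀ x ∈ C s, α * x ∈ C s := by
    intro α hα
    induction hα using Algebra.adjoin_induction with
    | mem y hy =>
      intro x hx
      rcases hy with rfl
      exact hWμ x hx
    | algebraMap r =>
      intro x hx
      rw [← Algebra.smul_def]
      exact Submodule.smul_mem _ r hx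
    | add y z hy hz ihy ihz =>
      intro x hx
      rw [add_mul]
      exact Submodule.add_mem _ (ihy x hx) (ihz x hx)
    | mul y z hy hz ihy ihz =>
      intro x hx
      rw [mul_assoc]
      exact ihy _ (ihz x hx)
  -- any μ-bistable subspace of S is contained in every C i
  have hmax : ∀ (X : Submodule F L), X ≤ S → (∀ x ∈ X, μ * x ∈ X) →
      (∀ x ∈ X, μ⁻¹ * x ∈ X) → ∀ i, X ≤ C i := by
    intro X hXS hXμ hXμi i
    induction i with
    | zero => exact hXS
    | succ n ih =>
      have h1 : C (n+1) = C n ⊓ bmul F μ (C n) := rfl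
      rw [h1]
      intro x hx
      refine Submodule.mem_inf.2 ⟨ih hx, ?_⟩
      refine (mem_bmul F).2 ⟨μ⁻¹ * x, ih (hXμi x hx), ?_⟩
      field_simp
  -- construct b
  clear_value s
  obtain ⟨s', rfl⟩ : ∃ s', s = s' + 1 := ⟨s - 1, by omega⟩
  have hs'lt : s' < s' + 1 := by omega
  obtain ⟨b', hb'mem, hb'notin⟩ :=
    SetLike.exists_of_lt (lt_of_le_of_ne (chainC_le_succ F μ S s') (hs_min s' hs'lt))
  have hb'0 : b' ≠ 0 := by
    rintro rfl
    exact hb'notin (Submodule.zero_mem _)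
  set b := (μ⁻¹) ^ s' * b' with hbdef
  have hb0 : b ≠ 0 := by
    apply mul_ne_zero _ hb'0
    exact pow_ne_zero _ (inv_ne_zero hμ0)
  have hμsb : μ ^ s' * b = b' := by
    rw [hbdef, ← mul_assoc, ← mul_pow, mul_inv_cancel₀ hμ0, one_pow, one_mul]
  -- downward membership: μ^j b ∈ C j for j ≤ s'
  have hdown : ∀ p, p ≤ s' → μ ^ (s' - p) * b ∈ C (s' - p) := by
    intro p
    induction p with
    | zero =>
      intro _
      simpa [hμsb] using hb'mem
    | succ n ih =>
      intro hn
      have hprev := ih (by omega)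
      have heq : s' - n = (s' - (n+1)) + 1 := by omega
      rw [heq] at hprev
      have h1 : C ((s' - (n+1)) + 1) = C (s' - (n+1)) ⊓ bmul F μ (C (s' - (n+1))) := rfl
      rw [h1] at hprev
      obtain ⟨-, hprev2⟩ := Submodule.mem_inf.1 hprev
      obtain ⟨y, hy, hxy⟩ := (mem_bmul F).1 hprev2
      have hyx : y = μ ^ (s' - (n+1)) * b := by
        have hpow : μ ^ (s' - (n+1) + 1) * b = μ * (μ ^ (s' - (n+1)) * b) := by
          ring
        rw [hpow] at hxy
        exact mul_left_cancel₀ hμ0 hxy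
      rwa [hyx] at hy
  have hmem : ∀ j, j ≤ s' → μ ^ j * b ∈ C j := by
    intro j hj
    have := hdown (s' - j) (by omega)
    rwa [show s' - (s' - j) = j by omega] at this
  -- non-membership: μ^j b ∉ C (j+1) for j ≤ s'
  have hup : ∀ p, ∀ j, j + p = s' → μ ^ j * b ∈ C (j+1) → b' ∈ C (s' + 1) := by
    intro p
    induction p with
    | zero =>
      intro j hj hmemb
      rw [Nat.add_zero] at hj
      subst hj
      rwa [hμsb] at hmemb
    | succ n ih =>
      intro j hj hmemb
      apply ih (j+1) (by omega)
      have h1 : C (j+2) = C (j+1) ⊓ bmul F μ (C (j+1)) := rfl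
      have hA : μ ^ (j+1) * b ∈ C (j+1) := hmem (j+1) (by omega)
      have hB : μ ^ (j+1) * b ∈ bmul F μ (C (j+1)) := by
        refine (mem_bmul F).2 ⟨μ ^ j * b, hmemb, ?_⟩
        ring
      show μ ^ (j+1) * b ∈ C ((j+1)+1)
      rw [show (j+1)+1 = j+2 from rfl, h1]
      exact Submodule.mem_inf.2 ⟨hA, hB⟩
  have hnot : ∀ j, j ≤ s' → μ ^ j * b ∉ C (j+1) := by
    intro j hj hmemb
    exact hb'notin (hup (s' - j) j (by omega) hmemb)
  -- step identity
  have hstep : ∀ j, j ≤ s' → C j = C (j+1) ⊔ Submodule.span F {μ ^ j * b} := by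
    intro j hj
    have hxne : μ ^ j * b ≠ 0 := mul_ne_zero (pow_ne_zero _ hμ0) hb0
    have hsub : C (j+1) ⊔ Submodule.span F {μ ^ j * b} ≤ C j := by
      apply sup_le (chainC_le_succ F μ S j)
      rw [Submodule.span_le, Set.singleton_subset_iff]
      exact hmem j hj
    have hinf : C (j+1) ⊓ Submodule.span F {μ ^ j * b} = ⊥ := by
      rw [eq_bot_iff]
      intro x hx
      obtain ⟨hx1, hx2⟩ := Submodule.mem_inf.1 hx
      rw [Submodule.mem_span_singleton] at hx2
      obtain ⟨c, rfl⟩ := hx2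
      rcases eq_or_ne c 0 with rfl | hc
      · simp
      · exfalso
        apply hnot j hj
        have := Submodule.smul_mem _ c⁻¹ hx1
        rwa [smul_smul, inv_mul_cancel₀ hc, one_smul] at this
    have hfr : finrank F ↥(C (j+1) ⊔ Submodule.span F {μ ^ j * b}) = finrank F (C j) := by
      have h := Submodule.finrank_sup_add_finrank_inf_eq (C (j+1)) (Submodule.span F {μ ^ j * b})
      rw [hinf] at h
      rw [finrank_span_singleton hxne] at h
      have h2 := hεi j (by omega)
      simp only [finrank_bot, add_zero] at h
      omega
    exact (Submodule.eq_of_le_of_finrank_le hsub (le_of_eq hfr.symm)).symm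
  -- assemble the span
  set G : ℕ → Submodule F L :=
    fun a => Submodule.span F ((fun j => μ ^ j * b) '' Set.Ico a (s'+1)) with hGdef
  have hG : ∀ p, ∀ a, a + p = s' + 1 → C a = C (s'+1) ⊔ G a := by
    intro p
    induction p with
    | zero =>
      intro a ha
      rw [Nat.add_zero] at ha
      subst ha
      have : G (s'+1) = ⊥ := by
        rw [hGdef]
        simp
      rw [this, sup_bot_eq]
    | succ n ih =>
      intro a ha
      have ha' : a ≤ s' := by omega
      have hIco : Set.Ico a (s'+1) = insert a (Set.Ico (a+1) (s'+1)) := by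
        ext x
        simp only [Set.mem_Ico, Set.mem_insert_iff]
        omega
      have hGa : G a = Submodule.span F {μ ^ a * b} ⊔ G (a+1) := by
        rw [hGdef]
        simp only
        rw [hIco, Set.image_insert_eq, Submodule.span_insert]
      rw [hstep a ha', ih (a+1) (by omega), hGa]
      rw [sup_assoc, sup_comm (G (a+1)) _]
  have hSdecomp : S = C (s'+1) ⊔ G 0 := by
    have h := hG (s'+1) 0 (by omega)
    have h0 : C 0 = S := rfl
    rwa [h0] at h
  have hG0 : G 0 = bmul F b (pows F μ (s'+1)) := by
    rw [hGdef]
    simp only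
    unfold bmul pows
    rw [Submodule.map_span]
    congr 1
    ext x
    simp only [Set.mem_image, Set.mem_Ico, Set.mem_range, LinearMap.mulLeft_apply]
    constructor
    · rintro ⟨j, ⟨-, hj⟩, rfl⟩
      exact ⟨μ ^ j, ⟨⟨j, hj⟩, rfl⟩, mul_comm b (μ ^ j)⟩
    · rintro ⟨y, ⟨⟨i, hi⟩, rfl⟩, rfl⟩
      exact ⟨(i : ℕ), ⟨Nat.zero_le _, hi⟩, mul_comm (μ ^ (i:ℕ)) b⟩
  -- divisibility
  obtain ⟨l, hlW⟩ := by
    have := finrank_dvd_of_stable F μ halg (C (s'+1)) hWstab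
    rwa [ht] at this
  have hdW : finrank F (C (s'+1)) + (s'+1) = k := hdi (s'+1) le_rfl
  have hb_not_W : b ∉ C (s'+1) := by
    intro hb
    apply hb'notin
    rw [← hμsb]
    exact hWstab (μ ^ s') (Subalgebra.pow_mem _ (Algebra.self_mem_adjoin_singleton F μ) s') b hb
  -- b * K and related facts
  have hBKfr : finrank F ↥(bmul F b (Subalgebra.toSubmodule K)) = t := by
    rw [bmul_finrank F hb0]
    exact ht
  have hpowsle : pows F μ (s'+1) ≤ Subalgebra.toSubmodule K := by
    unfold pows
    rw [Submodule.span_le]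
    rintro x ⟨i, rfl⟩
    exact Subalgebra.pow_mem _ (Algebra.self_mem_adjoin_singleton F μ) _
  have hBle : bmul F b (pows F μ (s'+1)) ≤ bmul F b (Subalgebra.toSubmodule K) :=
    bmul_mono F b hpowsle
  haveI : FiniteDimensional F ↥(Subalgebra.toSubmodule K) := hKfd
  haveI : FiniteDimensional F ↥(bmul F b (Subalgebra.toSubmodule K)) := bmul_fd F _
  haveI : FiniteDimensional F ↥(bmul F b (pows F μ (s'+1))) :=
    Submodule.finiteDimensional_of_le hBle
  have hfB : s' + 1 ≤ finrank F ↥(bmul F b (pows F μ (s'+1))) := by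
    have h := Submodule.finrank_sup_add_finrank_inf_eq (C (s'+1)) (bmul F b (pows F μ (s'+1)))
    have h2 : finrank F ↥(C (s'+1) ⊔ bmul F b (pows F μ (s'+1))) = k := by
      rw [← hG0, ← hSdecomp, hS]
    rw [h2] at h
    omega
  have hst : s' + 1 ≤ t := by
    have := Submodule.finrank_mono (M := L) (s := bmul F b (pows F μ (s'+1)))
      (t := bmul F b (Subalgebra.toSubmodule K)) hBle
    rw [hBKfr] at this
    omega
  have hsne : s' + 1 ≠ t := by
    intro hseq
    have hBeq : bmul F b (pows F μ (s'+1)) = bmul F b (Subalgebra.toSubmodule K) := by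
      apply Submodule.eq_of_le_of_finrank_le hBle
      rw [hBKfr, ← hseq]
      exact hfB
    have hBKS : bmul F b (Subalgebra.toSubmodule K) ≤ S := by
      rw [← hBeq, hSdecomp, ← hG0]
      exact le_sup_right
    have hBKC : bmul F b (Subalgebra.toSubmodule K) ≤ C (s'+1) := by
      apply hmax _ hBKS
      · rintro x hx
        obtain ⟨y, hy, rfl⟩ := (mem_bmul F).1 hx
        refine (mem_bmul F).2 ⟨μ * y, ?_, by ring⟩
        exact Subalgebra.mul_mem _ (Algebra.self_mem_adjoin_singleton F μ) hy
      · rintro x hx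
        obtain ⟨y, hy, rfl⟩ := (mem_bmul F).1 hx
        refine (mem_bmul F).2 ⟨μ⁻¹ * y, ?_, by ring⟩
        exact Subalgebra.mul_mem _ (inv_mem_adjoin F μ halg (Algebra.self_mem_adjoin_singleton F μ)) hy
    apply hb_not_W
    apply hBKC
    exact (mem_bmul F).2 ⟨1, Subalgebra.one_mem _, mul_one b⟩
  have hdisj : Disjoint (bmul F b (Subalgebra.toSubmodule K)) (C (s'+1)) := by
    rw [disjoint_iff, eq_bot_iff]
    intro x hx
    obtain ⟨hx1, hx2⟩ := Submodule.mem_inf.1 hx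
    obtain ⟨α, hα, rfl⟩ := (mem_bmul F).1 hx1
    rw [Submodule.mem_bot]
    by_contra hne
    have hα0 : α ≠ 0 := by
      rintro rfl
      exact hne (mul_zero b)
    apply hb_not_W
    have := hWstab α⁻¹ (inv_mem_adjoin F μ halg hα) _ hx2
    rwa [← mul_assoc, mul_comm α⁻¹ b, mul_assoc, inv_mul_cancel₀ hα0, mul_one] at this
  -- case split
  rcases lt_or_ge k t with hkt | htk
  · left
    refine ⟨hkt, b, hb0, ?_⟩
    have hl0 : l = 0 := by
      rcases Nat.eq_zero_or_pos l with h | h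
      · exact h
      · exfalso
        have : t ≤ l * t := Nat.le_mul_of_pos_left t h
        omega
    have hW0 : finrank F (C (s'+1)) = 0 := by
      rw [hlW, hl0, zero_mul]
    have hWbot : C (s'+1) = ⊥ := by
      rwa [Submodule.finrank_eq_zero] at hW0
    have hsk : s' + 1 = k := by omega
    rw [hSdecomp, hWbot, bot_sup_eq, hG0, hsk]
  · right
    have hl1 : 1 ≤ l := by
      rcases Nat.eq_zero_or_pos l with h | h
      · exfalso
        rw [h, zero_mul] at hlW
        omega
      · exact h
    have htl : t ≤ l * t := Nat.le_mul_of_pos_left t hl1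
    refine ⟨by omega, l, s'+1, ?_, by omega, by omega, C (s'+1), b, hb0, hWstab, hlW, hdisj, ?_⟩
    · rw [mul_comm]
      omega
    · rw [hSdecomp, hG0]
end
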